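/- arXiv:2009.06906 — 3 statements merged into one kernel-verified Lean document; each statement's English description precedes it below -/
import Mathlib

section
/- Let (i_1,...,i_N) with N = n(n+1)/2 be a reduced word of the longest element w_0 of S_{n+1}. Then there exist unique indices 1 ≤ a_1 < a_2 < ⋯ < a_n ≤ N such that (i_{a_1}, i_{a_2}, ..., i_{a_n}) = (1, 2, ..., n). -/
/-!
Let `v_k = s_{i_k} ⋯ s_{i_N}` be the suffix products of a reduced word of `w` and follow the image
`f k = v_k (n + 1)` of the last point. Since the Coxeter length of a permutation is its number of
inversions, each letter `i_k` is an ascent of `v_{k+1}`, so `v_{k+1}` does not send `n + 1` to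
`i_k`. Hence, as `k` increases, `f` either stays put (away from `i_k` and `i_k + 1`) or steps from
`i_k` to `i_k + 1`: it is a staircase climbing from `w (n + 1) = 1` to `n + 1`, whose step from `j`
to `j + 1` happens at a letter `j`. These steps form the required chain, and two inductions along
any ascending chain `1, …, n` show that its `j`-th position is where `f` steps from `j` to
`j + 1`.
-/

open Equiv List

/-- The simple transposition `s_{c+1}` (0-based: swaps `c` and `c+1` in `Fin (n+1)`). -/
def simpleT (n c : ℕ) : Equiv.Perm (Fin (n + 1)) :=
  if h : c + 1 ≤ n then Equiv.swap ⟨c, by omega⟩ ⟨c + 1, by omega⟩ else 1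

/-- `l` is a word for the permutation `w` in `S_{n+1}`, with 0-based letters in `[0, n)`. -/
def IsWord (n : ℕ) (w : Equiv.Perm (Fin (n + 1))) (l : List ℕ) : Prop :=
  (∀ c ∈ l, c < n) ∧ (l.map (simpleT n)).prod = w

/-- The Coxeter length of `w`: minimal length of a word for `w`. -/
noncomputable def coxLen (n : ℕ) (w : Equiv.Perm (Fin (n + 1))) : ℕ :=
  sInf {r | ∃ l : List ℕ, l.length = r ∧ IsWord n w l}

/-- `l` is a reduced word of `w`. -/
def IsReducedWord (n : ℕ) (w : Equiv.Perm (Fin (n + 1))) (l : List ℕ) : Prop :=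
  IsWord n w l ∧ l.length = coxLen n w

/-- The longest element of `S_{n+1}`, sending (0-based) `i` to `n - i`. -/
def w0 (n : ℕ) : Equiv.Perm (Fin (n + 1)) :=
  ⟨Fin.rev, Fin.rev, Fin.rev_rev, Fin.rev_rev⟩

/-- The word poset relation of the word `l`: transitive closure of
`j ≤ k` and `|l_j - l_k| ≤ 1`. -/
def wordRel (l : List ℕ) : Fin l.length → Fin l.length → Prop :=
  Relation.ReflTransGen (fun j k => j ≤ k ∧ l.get j ≤ l.get k + 1 ∧ l.get k ≤ l.get j + 1)

/-- A 2-move (commutation). -/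
def CommMove (l l' : List ℕ) : Prop :=
  ∃ (u v : List ℕ) (a b : ℕ), (a + 1 < b ∨ b + 1 < a) ∧
    l = u ++ a :: b :: v ∧ l' = u ++ b :: a :: v

/-- Equivalence of words by sequences of 2-moves. -/
def CommEquiv : List ℕ → List ℕ → Prop := Relation.ReflTransGen CommMove

namespace Equiv.Perm

variable {α : Type*} [LinearOrder α]

lemma swap_apply_lt_swap_apply_iff {a b x y : α} (hab : a ⋖ b) (hxy : ¬(x = a ∧ y = b))
    (hyx : ¬(x = b ∧ y = a)) : swap a b x < swap a b y ↔ x < y := by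
  have lt_a_iff : ∀ z, z ≠ a → (z < a ↔ z < b) := fun z hz =>
    ⟨fun h => h.trans hab.lt, fun h => (hab.le_of_lt h).lt_of_ne hz⟩
  have a_lt_iff : ∀ z, z ≠ b → (a < z ↔ b < z) := fun z hz =>
    ⟨fun h => (hab.ge_of_gt h).lt_of_ne' hz, hab.lt.trans⟩
  have hba : b ≠ a := hab.lt.ne'
  rcases eq_or_ne x a with hxa | hxa <;> rcases eq_or_ne x b with hxb | hxb <;>
    rcases eq_or_ne y a with hya | hya <;> rcases eq_or_ne y b with hyb | hyb <;>
    simp_all [swap_apply_of_ne_of_ne]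

variable [Fintype α]

def inversions (w : Perm α) : Finset (α × α) :=
  Finset.univ.filter fun p => p.1 < p.2 ∧ w p.2 < w p.1

def invCount (w : Perm α) : ℕ := w.inversions.card

@[simp]
lemma invCount_one : invCount (1 : Perm α) = 0 :=
  Finset.card_eq_zero.2 <| Finset.filter_eq_empty_iff.2 fun _ _ h => lt_asymm h.1 h.2

variable {a b : α} {w : Perm α}

lemma inversions_swap_mul (hab : a ⋖ b) (h : w⁻¹ a < w⁻¹ b) :
    (swap a b * w).inversions = insert (w⁻¹ a, w⁻¹ b) w.inversions := by
  obtain ⟨u, rfl⟩ := w.surjective a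
  obtain ⟨v, rfl⟩ := w.surjective b
  simp only [coe_inv, symm_apply_apply] at h ⊢
  ext ⟨x, y⟩
  simp only [inversions, Finset.mem_insert, Finset.mem_filter, Finset.mem_univ, true_and,
    Prod.mk.injEq]
  rw [mul_apply, mul_apply]
  by_cases hxy : x = u ∧ y = v
  · obtain ⟨rfl, rfl⟩ := hxy
    simp [h, hab.lt]
  by_cases hyx : x = v ∧ y = u
  · obtain ⟨rfl, rfl⟩ := hyx
    simp [h.not_gt, h.ne']
  rw [swap_apply_lt_swap_apply_iff hab (by simpa [and_comm] using hyx)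
    (by simpa [and_comm] using hxy)]
  simp [hxy]

lemma invCount_swap_mul_of_lt (hab : a ⋖ b) (h : w⁻¹ a < w⁻¹ b) :
    (swap a b * w).invCount = w.invCount + 1 := by
  rw [invCount, inversions_swap_mul hab h, Finset.card_insert_of_notMem]
  · rfl
  · simp [inversions, hab.lt.not_gt]

lemma invCount_swap_mul_of_gt (hab : a ⋖ b) (h : w⁻¹ b < w⁻¹ a) :
    (swap a b * w).invCount + 1 = w.invCount := by
  have h' : (swap a b * w)⁻¹ a < (swap a b * w)⁻¹ b := by simpa [mul_apply] using h
  simpa [← mul_assoc] using (invCount_swap_mul_of_lt hab h').symm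

lemma invCount_swap_mul_le (hab : a ⋖ b) (w : Perm α) :
    (swap a b * w).invCount ≤ w.invCount + 1 := by
  rcases lt_or_gt_of_ne (w⁻¹.injective.ne hab.lt.ne) with h | h
  · exact (invCount_swap_mul_of_lt hab h).le
  · have := invCount_swap_mul_of_gt hab h
    omega

end Equiv.Perm

lemma Fin.castSucc_covBy_succ {n : ℕ} (i : Fin n) : i.castSucc ⋖ i.succ :=
  ⟨Fin.castSucc_lt_succ, fun j h₁ h₂ => by
    rw [Fin.lt_def, Fin.val_castSucc] at h₁
    rw [Fin.lt_def, Fin.val_succ] at h₂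
    omega⟩

section Words

variable {n : ℕ}

lemma simpleT_of_lt (i : Fin n) : simpleT n i = swap i.castSucc i.succ := by
  simp [simpleT]
  rfl

lemma simpleT_of_le {c : ℕ} (hc : n ≤ c) : simpleT n c = 1 := by
  simp [simpleT]
  omega

lemma invCount_simpleT_mul_le (c : ℕ) (w : Perm (Fin (n + 1))) :
    (simpleT n c * w).invCount ≤ w.invCount + 1 := by
  rcases lt_or_ge c n with hc | hc
  · rw [show c = (⟨c, hc⟩ : Fin n) from rfl, simpleT_of_lt]
    exact Perm.invCount_swap_mul_le (Fin.castSucc_covBy_succ _) w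
  · simp [simpleT_of_le hc]

lemma invCount_prod_le_length (l : List ℕ) : (l.map (simpleT n)).prod.invCount ≤ l.length := by
  induction l with
  | nil => simp
  | cons c l ih =>
    rw [map_cons, prod_cons, length_cons]
    exact (invCount_simpleT_mul_le c _).trans (by omega)

lemma exists_descent {w : Perm (Fin (n + 1))} (hw : w ≠ 1) :
    ∃ i : Fin n, w⁻¹ i.succ < w⁻¹ i.castSucc := by
  by_contra! h
  have hmono : StrictMono ⇑w⁻¹ := Fin.strictMono_iff_lt_succ.2 fun i =>
    (h i).lt_of_ne (w⁻¹.injective.ne Fin.castSucc_lt_succ.ne)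
  exact hw (inv_eq_one.1 (Equiv.ext fun _ => hmono.apply_eq))

lemma exists_isWord_length_eq_invCount (w : Perm (Fin (n + 1))) :
    ∃ l, IsWord n w l ∧ l.length = w.invCount := by
  induction hk : w.invCount generalizing w with
  | zero =>
    refine ⟨[], ⟨by simp, ?_⟩, rfl⟩
    by_contra hw
    obtain ⟨i, hi⟩ := exists_descent (Ne.symm hw)
    have := Perm.invCount_swap_mul_of_gt (Fin.castSucc_covBy_succ i) hi
    omega
  | succ k ih =>
    obtain ⟨i, hi⟩ := exists_descent (w := w) (by rintro rfl; simp at hk)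
    have hdesc := Perm.invCount_swap_mul_of_gt (Fin.castSucc_covBy_succ i) hi
    obtain ⟨l, ⟨hletters, hprod⟩, hlen⟩ :=
      ih (simpleT n i * w) (by rw [simpleT_of_lt]; omega)
    refine ⟨i :: l, ⟨?_, ?_⟩, by simp [hlen]⟩
    · simpa using And.intro i.isLt hletters
    · rw [map_cons, prod_cons, hprod, ← mul_assoc, simpleT_of_lt, swap_mul_self, one_mul]

lemma IsWord.coxLen_le {w : Perm (Fin (n + 1))} {l : List ℕ} (hl : IsWord n w l) :
    coxLen n w ≤ l.length :=
  Nat.sInf_le ⟨l, rfl, hl⟩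

theorem coxLen_eq_invCount (w : Perm (Fin (n + 1))) : coxLen n w = w.invCount := by
  obtain ⟨l, hl, hlen⟩ := exists_isWord_length_eq_invCount w
  refine le_antisymm (hlen ▸ hl.coxLen_le) (le_csInf ⟨_, l, rfl, hl⟩ ?_)
  rintro _ ⟨l', rfl, -, rfl⟩
  exact invCount_prod_le_length l'

end Words

section ReducedWords

variable {n : ℕ} {w : Perm (Fin (n + 1))} {l : List ℕ} {k : ℕ}

def suffixProd (n : ℕ) (l : List ℕ) (k : ℕ) : Perm (Fin (n + 1)) :=
  ((l.drop k).map (simpleT n)).prod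

lemma suffixProd_eq_mul (hk : k < l.length) :
    suffixProd n l k = simpleT n l[k] * suffixProd n l (k + 1) := by
  rw [suffixProd, drop_eq_getElem_cons hk, map_cons, prod_cons, suffixProd]

lemma suffixProd_of_length_le (hk : l.length ≤ k) : suffixProd n l k = 1 := by
  simp [suffixProd, drop_of_length_le hk]

lemma IsReducedWord.invCount_suffixProd (hred : IsReducedWord n w l) (k : ℕ) :
    (suffixProd n l k).invCount = l.length - k := by
  have hle := invCount_prod_le_length (n := n) (l.drop k)
  rw [length_drop] at hle
  obtain ⟨m, hm, hmlen⟩ := exists_isWord_length_eq_invCount (suffixProd n l k)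
  have hword : IsWord n w (l.take k ++ m) := by
    refine ⟨fun c hc => ?_, ?_⟩
    · rcases mem_append.1 hc with hc | hc
      · exact hred.1.1 c (mem_of_mem_take hc)
      · exact hm.1 c hc
    · rw [map_append, prod_append, hm.2, suffixProd, ← prod_append, ← map_append,
        take_append_drop, hred.1.2]
  have := hword.coxLen_le
  rw [← hred.2, length_append, length_take] at this
  exact le_antisymm hle (by omega)

lemma IsReducedWord.inv_lt_inv_suffixProd (hred : IsReducedWord n w l) (hk : k < l.length)
    {i : Fin n} (hi : l[k] = i) :
    (suffixProd n l (k + 1))⁻¹ i.castSucc < (suffixProd n l (k + 1))⁻¹ i.succ := by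
  by_contra! h
  have := Perm.invCount_swap_mul_of_gt (Fin.castSucc_covBy_succ i)
    (h.lt_of_ne ((suffixProd n l (k + 1))⁻¹.injective.ne Fin.castSucc_lt_succ.ne'))
  rw [← simpleT_of_lt, ← hi, ← suffixProd_eq_mul hk, hred.invCount_suffixProd,
    hred.invCount_suffixProd] at this
  omega

def lastImage (n : ℕ) (l : List ℕ) (k : ℕ) : ℕ := suffixProd n l k (Fin.last n)

lemma lastImage_le (k : ℕ) : lastImage n l k ≤ n := Fin.is_le _

lemma lastImage_of_length_le (hk : l.length ≤ k) : lastImage n l k = n := by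
  simp [lastImage, suffixProd_of_length_le hk]

lemma IsWord.lastImage_zero (hl : IsWord n w l) : lastImage n l 0 = w (Fin.last n) := by
  rw [lastImage, suffixProd, drop_zero, hl.2]

lemma IsReducedWord.lastImage_succ_cases (hred : IsReducedWord n w l) (hk : k < l.length) :
    (lastImage n l (k + 1) = lastImage n l k ∧ lastImage n l k ≠ l[k] ∧
        lastImage n l k ≠ l[k] + 1) ∨
      (lastImage n l k = l[k] ∧ lastImage n l (k + 1) = l[k] + 1) := by
  set i : Fin n := ⟨l[k], hred.1.1 _ (getElem_mem hk)⟩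
  set v := suffixProd n l (k + 1)
  have hascent := hred.inv_lt_inv_suffixProd hk (i := i) rfl
  have hv : v (Fin.last n) ≠ i.castSucc := fun h => by
    rw [← h, Perm.coe_inv, symm_apply_apply] at hascent
    exact hascent.not_ge (Fin.le_last _)
  have hstep : lastImage n l k = swap i.castSucc i.succ (v (Fin.last n)) := by
    rw [lastImage, suffixProd_eq_mul hk, Perm.mul_apply, ← simpleT_of_lt]
  rw [hstep, show lastImage n l (k + 1) = v (Fin.last n) from rfl]
  by_cases hp : v (Fin.last n) = i.succ
  · right
    simp [hp, i]
  · left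
    rw [swap_apply_of_ne_of_ne hv hp]
    exact ⟨rfl, fun h => hv (Fin.ext h), fun h => hp (Fin.ext h)⟩

lemma IsReducedWord.monotone_lastImage (hred : IsReducedWord n w l) :
    Monotone (lastImage n l) := by
  refine monotone_nat_of_le_succ fun k => ?_
  rcases lt_or_ge k l.length with hk | hk
  · rcases hred.lastImage_succ_cases hk with h | h <;> omega
  · rw [lastImage_of_length_le hk, lastImage_of_length_le (by omega)]

end ReducedWords

section Staircase

lemma Monotone.eq_of_apply_le_of_lt_apply_succ {α : Type*} [Preorder α] {f : ℕ → α}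
    (hf : Monotone f) {t : α} {k k' : ℕ} (hk : f k ≤ t) (hk' : t < f (k + 1)) (hl : f k' ≤ t)
    (hl' : t < f (k' + 1)) : k = k' :=
  le_antisymm (Nat.lt_succ_iff.1 (hf.reflect_lt (hk.trans_lt hl')))
    (Nat.lt_succ_iff.1 (hf.reflect_lt (hl.trans_lt hk')))

lemma Nat.exists_apply_le_and_lt_apply_succ {α : Type*} [LinearOrder α] {f : ℕ → α} {t : α}
    (h₀ : f 0 ≤ t) {N : ℕ} (hN : t < f N) : ∃ k, f k ≤ t ∧ t < f (k + 1) := by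
  induction N with
  | zero => exact absurd hN h₀.not_gt
  | succ N ih =>
    by_cases h : t < f N
    · exact ih h
    · exact ⟨N, not_lt.1 h, hN⟩

variable {f : ℕ → ℕ} {n : ℕ} (hf : Monotone f) {a : Fin n → ℕ} (ha : StrictMono a)
include hf ha

lemma Monotone.apply_le_of_ne_succ (hbound : ∀ k, f k ≤ n) (hne : ∀ j, f (a j) ≠ j + 1)
    (j : Fin n) : f (a j) ≤ j := by
  rcases n with _ | n
  · exact j.elim0
  induction j using Fin.reverseInduction with
  | last =>
    have := hbound (a (Fin.last n))
    have := hne (Fin.last n)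
    simp only [Fin.val_last] at *
    omega
  | cast i ih =>
    have := hf (ha (Fin.castSucc_lt_succ (i := i))).le
    have := hne i.castSucc
    simp only [Fin.val_castSucc, Fin.val_succ] at *
    omega

lemma Monotone.lt_apply_succ_of_ne (hne : ∀ j, f (a j + 1) ≠ j) (j : Fin n) :
    j < f (a j + 1) := by
  rcases n with _ | n
  · exact j.elim0
  induction j using Fin.induction with
  | zero =>
    have := hne 0
    simp only [Fin.val_zero] at *
    omega
  | succ i ih =>
    have := hf (Nat.add_le_add_right (ha (Fin.castSucc_lt_succ (i := i))).le 1)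
    have := hne i.succ
    simp only [Fin.val_castSucc, Fin.val_succ] at *
    omega

end Staircase

section Chains

variable {n : ℕ} {w : Perm (Fin (n + 1))} {l : List ℕ}

lemma IsReducedWord.ascending_chain_iff (hred : IsReducedWord n w l)
    {a : Fin n → Fin l.length} :
    (StrictMono a ∧ ∀ j : Fin n, l.get (a j) = (j : ℕ)) ↔
      ∀ j : Fin n, lastImage n l (a j) ≤ j ∧ j < lastImage n l (a j + 1) := by
  have hmono := hred.monotone_lastImage
  constructor
  · rintro ⟨ha, hletters⟩ j
    have hstep (j : Fin n) := hred.lastImage_succ_cases (a j).isLt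
    have hletter (j : Fin n) : l[(a j : ℕ)] = j := hletters j
    refine ⟨hmono.apply_le_of_ne_succ (Fin.val_strictMono.comp ha) lastImage_le
      (fun j => ?_) j, hmono.lt_apply_succ_of_ne (Fin.val_strictMono.comp ha) (fun j => ?_) j⟩
    all_goals
      have := hstep j
      have := hletter j
      simp only [Function.comp_apply] at *
      omega
  · intro hjump
    have hletter (j : Fin n) : l.get (a j) = j := by
      have := hjump j
      rcases hred.lastImage_succ_cases (a j).isLt with h | h
      · omega
      · simp only [get_eq_getElem]
        omega
    refine ⟨Monotone.strictMono_of_injective (fun i j hij => ?_) (fun i j hij => ?_), hletter⟩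
    · have hi := hjump i
      have hj := hjump j
      have : (i : ℕ) ≤ j := hij
      exact Nat.lt_succ_iff.1 <| hmono.reflect_lt
        (show lastImage n l (a i) < lastImage n l (a j + 1) by omega)
    · exact Fin.ext (by rw [← hletter i, ← hletter j, hij])

theorem IsReducedWord.existsUnique_ascending_chain (hred : IsReducedWord n w l)
    (hw : w (Fin.last n) = 0) :
    ∃! a : Fin n → Fin l.length, StrictMono a ∧ ∀ j : Fin n, l.get (a j) = (j : ℕ) := by
  simp_rw [hred.ascending_chain_iff]
  have hjump (j : Fin n) : ∃ k : Fin l.length,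
      lastImage n l k ≤ j ∧ j < lastImage n l (k + 1) := by
    have h₀ : lastImage n l 0 ≤ j := by simp [hred.1.lastImage_zero, hw]
    have hN : j < lastImage n l l.length := by simp [lastImage_of_length_le le_rfl]
    obtain ⟨k, hk⟩ := Nat.exists_apply_le_and_lt_apply_succ h₀ hN
    have : k < l.length := by
      by_contra! h
      have := lastImage_of_length_le (n := n) h
      omega
    exact ⟨⟨k, this⟩, hk⟩
  choose a ha using hjump
  exact ⟨a, ha, fun b hb => funext fun j => Fin.ext <|
    hred.monotone_lastImage.eq_of_apply_le_of_lt_apply_succ (hb j).1 (hb j).2 (ha j).1 (ha j).2⟩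

end Chains

/-- In any reduced word of the longest element of $S_{n+1}$ there is a unique
increasing sequence of positions carrying the letters `(1, 2, ..., n)`
(0-based: `(0, 1, ..., n-1)`). -/
theorem exists_unique_ascending_chain (n : ℕ) (l : List ℕ)
    (h : IsReducedWord n (w0 n) l) :
    ∃! a : Fin n → Fin l.length,
      StrictMono a ∧ ∀ j : Fin n, l.get (a j) = (j : ℕ) :=
  h.existsUnique_ascending_chain (Fin.rev_last n)
end

section
/- Let w be an element of S_{n+1}, let (i_1,...,i_ℓ) be a reduced word of w, and fix i in [n]. Then the set of positions {j in [ℓ] : i_j = i}, ordered by the word poset relation, is a chain; equivalently, for any two positions j < k with i_j = i_k = i, there is a position m with j < m < k and |i_m - i| = 1. -/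
open Equiv List

/-! If no letter `i ± 1` occurred between two occurrences of `i`, every letter in between
would commute with `s_i` (letters equal to `i` trivially so), hence the two copies of `s_i`
could be brought together and cancelled, giving a word for `w` that is shorter by two. -/

lemma simpleT_mul_self (n c : ℕ) : simpleT n c * simpleT n c = 1 := by
  unfold simpleT
  split_ifs
  · exact swap_mul_self _ _
  · rfl

lemma simpleT_commute_of_not_adjacent (n : ℕ) {a b : ℕ} (hab : b ≠ a + 1) (hba : b + 1 ≠ a) :
    Commute (simpleT n a) (simpleT n b) := by
  rcases eq_or_ne a b with rfl | hne
  · exact Commute.refl _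
  unfold simpleT
  split_ifs
  · exact Perm.Disjoint.commute (Perm.disjoint_swap_swap (by simp [Fin.ext_iff]; omega))
  all_goals simp

lemma simpleT_mul_prod_mul_simpleT (n i : ℕ) {v : List ℕ}
    (hv : ∀ c ∈ v, c ≠ i + 1 ∧ c + 1 ≠ i) :
    simpleT n i * (v.map (simpleT n)).prod * simpleT n i = (v.map (simpleT n)).prod := by
  have hcomm : Commute (simpleT n i) (v.map (simpleT n)).prod :=
    Commute.list_prod_right _ _ fun _ hx => by
      obtain ⟨c, hc, rfl⟩ := List.mem_map.1 hx
      exact simpleT_commute_of_not_adjacent n (hv c hc).1 (hv c hc).2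
  rw [hcomm.eq, mul_assoc, simpleT_mul_self, mul_one]

lemma IsWord.cancel {n i : ℕ} {w : Perm (Fin (n + 1))} {u v t : List ℕ}
    (hw : IsWord n w (u ++ i :: v ++ i :: t)) (hv : ∀ c ∈ v, c ≠ i + 1 ∧ c + 1 ≠ i) :
    IsWord n w (u ++ v ++ t) := by
  obtain ⟨hlt, hprod⟩ := hw
  refine ⟨fun c hc => hlt c (by simp only [mem_append, mem_cons] at hc ⊢; tauto), ?_⟩
  rw [← hprod]
  simp only [map_append, map_cons, prod_append, prod_cons]
  conv_lhs => rw [← simpleT_mul_prod_mul_simpleT n i hv]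
  simp only [mul_assoc]

lemma IsReducedWord.exists_adjacent_of_eq_append {n i : ℕ} {w : Perm (Fin (n + 1))}
    {u v t : List ℕ} (h : IsReducedWord n w (u ++ i :: v ++ i :: t)) :
    ∃ c ∈ v, c = i + 1 ∨ c + 1 = i := by
  by_contra! hv
  have hle : coxLen n w ≤ (u ++ v ++ t).length :=
    Nat.sInf_le ⟨_, rfl, h.1.cancel fun c hc => hv c hc⟩
  have hlen := h.2
  simp only [length_append, length_cons] at hle hlen
  omega

lemma eq_take_append_getElem_cons_slice {α : Type*} (l : List α) {j k : ℕ} (hjk : j < k)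
    (hk : k < l.length) :
    l = l.take j ++ l[j] :: (l.drop (j + 1)).take (k - j - 1) ++ l[k] :: l.drop (k + 1) := by
  conv_lhs => rw [← take_append_drop j l, drop_eq_getElem_cons (by omega),
    ← take_append_drop (k - j - 1) (l.drop (j + 1)), drop_drop,
    show j + 1 + (k - j - 1) = k by omega, drop_eq_getElem_cons hk]
  simp

lemma exists_getElem_of_mem_take_drop {α : Type*} {l : List α} {j k : ℕ} {c : α}
    (hc : c ∈ (l.drop (j + 1)).take (k - j - 1)) :
    ∃ (m : ℕ) (hm : m < l.length), j < m ∧ m < k ∧ l[m] = c := by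
  obtain ⟨p, hp, rfl⟩ := mem_take_iff_getElem.1 hc
  simp only [length_drop] at hp
  exact ⟨j + 1 + p, by omega, by omega, by omega, by simp⟩

lemma IsReducedWord.exists_adjacent_between {n : ℕ} {w : Perm (Fin (n + 1))} {l : List ℕ}
    (h : IsReducedWord n w l) {i : ℕ} {j k : Fin l.length} (hjk : j < k)
    (hj : l.get j = i) (hk : l.get k = i) :
    ∃ m : Fin l.length, j < m ∧ m < k ∧ (l.get m = i + 1 ∨ l.get m + 1 = i) := by
  have hsplit := eq_take_append_getElem_cons_slice l hjk k.isLt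
  simp only [get_eq_getElem] at hj hk
  rw [hj, hk] at hsplit
  rw [hsplit] at h
  obtain ⟨c, hc, hadj⟩ := h.exists_adjacent_of_eq_append
  obtain ⟨m, hm, hjm, hmk, rfl⟩ := exists_getElem_of_mem_take_drop hc
  exact ⟨⟨m, hm⟩, hjm, hmk, hadj⟩

lemma wordRel_of_le {l : List ℕ} {j k : Fin l.length} (hjk : j ≤ k)
    (h₁ : l.get j ≤ l.get k + 1) (h₂ : l.get k ≤ l.get j + 1) : wordRel l j k :=
  Relation.ReflTransGen.single ⟨hjk, h₁, h₂⟩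

lemma IsReducedWord.wordRel_of_lt {n : ℕ} {w : Perm (Fin (n + 1))} {l : List ℕ}
    (h : IsReducedWord n w l) {i : ℕ} {j k : Fin l.length} (hjk : j < k)
    (hj : l.get j = i) (hk : l.get k = i) : wordRel l j k := by
  obtain ⟨m, hjm, hmk, hm⟩ := h.exists_adjacent_between hjk hj hk
  exact (wordRel_of_le hjm.le (by omega) (by omega)).trans
    (wordRel_of_le hmk.le (by omega) (by omega))

theorem column_isChain_general (n : ℕ) (w : Equiv.Perm (Fin (n + 1))) (l : List ℕ)
    (h : IsReducedWord n w l) (i : ℕ) :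
    (∀ j k : Fin l.length, l.get j = i → l.get k = i →
      wordRel l j k ∨ wordRel l k j) ∧
    (∀ j k : Fin l.length, j < k → l.get j = i → l.get k = i →
      ∃ m : Fin l.length, j < m ∧ m < k ∧ (l.get m = i + 1 ∨ l.get m + 1 = i)) := by
  refine ⟨fun j k hj hk => ?_, fun j k hjk => h.exists_adjacent_between hjk⟩
  rcases lt_trichotomy j k with hjk | rfl | hkj
  · exact .inl (h.wordRel_of_lt hjk hj hk)
  · exact .inl Relation.ReflTransGen.refl
  · exact .inr (h.wordRel_of_lt hkj hk hj)

/-- In a reduced word, the positions carrying a fixed letter `i` form a chain in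
the word poset; equivalently, between two occurrences of the letter `i` there is
a letter differing from `i` by exactly one. -/
theorem column_isChain (n : ℕ) (w : Equiv.Perm (Fin (n + 1))) (l : List ℕ)
    (h : IsReducedWord n w l) (i : ℕ) (hi : i < n) :
    (∀ j k : Fin l.length, l.get j = i → l.get k = i →
      wordRel l j k ∨ wordRel l k j) ∧
    (∀ j k : Fin l.length, j < k → l.get j = i → l.get k = i →
      ∃ m : Fin l.length, j < m ∧ m < k ∧ (l.get m = i + 1 ∨ l.get m + 1 = i)) :=
  column_isChain_general n w l h i
end

section
/- Let i be a reduced word of an element w of S_{n+1} with word poset P_i. The map sending a linear extension p_1 p_2 ⋯ p_ℓ of P_i to the word (i_{p_1}, i_{p_2}, ..., i_{p_ℓ}) is a bijection from the set of linear extensions of P_i onto the commutation class of i; in particular, the size of the commutation class of i equals the number of linear extensions of P_i. -/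
open Equiv List

/-!
Exchanging two adjacent entries `p_j, p_{j+1}` of a linear extension changes its word by the
commutation of the letters `i_{p_j}, i_{p_{j+1}}`, and when these letters differ by more than one
the exchanged listing is again a linear extension, since `p_j, p_{j+1}` are then incomparable.
Following a chain of commutations from `i` (the identity extension) gives surjectivity.
Conversely, a linear extension other than the identity has an adjacent descent, whose letters
must differ by more than one; undoing it lowers the extension lexicographically, so induction
places its word in the commutation class. Injectivity holds because positions carrying equal
letters are comparable, so two extensions with the same word cannot first differ anywhere.
-/

def IsLinearExtension (l : List ℕ) (e : Perm (Fin l.length)) : Prop :=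
  ∀ j k, wordRel l (e j) (e k) → j ≤ k

def readWord (l : List ℕ) (e : Perm (Fin l.length)) : List ℕ :=
  ofFn fun j => l.get (e j)

theorem Fin.swap_apply_lt_swap_apply_of_adjacent {n : ℕ} {i j a b : Fin n}
    (hij : (j : ℕ) = i + 1) (hab : a < b) (hne : ¬(a = i ∧ b = j)) :
    Equiv.swap i j a < Equiv.swap i j b := by
  simp only [swap_apply_def]
  split_ifs <;> simp only [Fin.ext_iff, Fin.lt_def] at * <;> omega

theorem List.apply_eq_getElem_of_ofFn_eq {α : Type*} {n : ℕ} {f : Fin n → α} {m : List α}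
    (hf : ofFn f = m) (x : Fin n) : f x = m[(x : ℕ)]'(by simp [← hf]) := by
  rw [← List.getElem_of_eq hf (by simp), List.getElem_ofFn]

theorem List.ofFn_comp_swap_of_eq_append {α : Type*} {n : ℕ} {f : Fin n → α} {u v : List α}
    {a b : α} (hf : ofFn f = u ++ a :: b :: v) {i j : Fin n} (hi : (i : ℕ) = u.length)
    (hij : (j : ℕ) = i + 1) :
    ofFn (f ∘ Equiv.swap i j) = u ++ b :: a :: v := by
  apply List.ext_getElem (by simpa using congrArg length hf)
  intro k hk _
  rw [List.getElem_ofFn, Function.comp_apply, List.apply_eq_getElem_of_ofFn_eq hf]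
  simp only [swap_apply_def, Fin.ext_iff]
  split_ifs <;> simp only [List.getElem_append, List.getElem_cons] <;> split_ifs <;>
    first | rfl | omega

theorem List.ofFn_eq_append_cons_cons {α : Type*} {n : ℕ} (f : Fin n → α) {i j : Fin n}
    (hij : (j : ℕ) = i + 1) :
    ofFn f = (ofFn f).take i ++ f i :: f j :: (ofFn f).drop (j + 1) := by
  have hi : f i = (ofFn f)[(i : ℕ)]'(by simp) := (List.getElem_ofFn _).symm
  have hj : f j = (ofFn f)[(i : ℕ) + 1]'(by simp; omega) := by
    rw [List.getElem_ofFn]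
    exact congrArg f (Fin.ext hij)
  rw [hi, hj, hij, List.getElem_cons_drop, List.getElem_cons_drop, List.take_append_drop]

theorem Equiv.Perm.exists_adjacent_descent {n : ℕ} {σ : Perm (Fin n)} (h : σ ≠ 1) :
    ∃ i j : Fin n, (j : ℕ) = i + 1 ∧ σ j < σ i := by
  cases n with
  | zero => exact absurd (Subsingleton.elim σ 1) h
  | succ n =>
    by_contra! hasc
    have hmono : StrictMono σ := Fin.strictMono_iff_lt_succ.2 fun i =>
      (hasc _ _ (by simp)).lt_of_ne (σ.injective.ne Fin.castSucc_lt_succ.ne)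
    exact h (Equiv.ext fun x => DFunLike.congr_fun
      (Subsingleton.elim (hmono.orderIsoOfSurjective σ σ.surjective) (OrderIso.refl _)) x)

section LinearExtension

variable {l : List ℕ} {e : Perm (Fin l.length)}

theorem wordRel_le {j k : Fin l.length} (h : wordRel l j k) : j ≤ k := by
  induction h with
  | refl => exact le_rfl
  | tail _ hstep ih => exact ih.trans hstep.1

theorem isLinearExtension_one : IsLinearExtension l 1 := fun _ _ => wordRel_le

theorem readWord_one : readWord l 1 = l := ofFn_get l

theorem IsLinearExtension.far_of_lt (he : IsLinearExtension l e) {j k : Fin l.length}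
    (hjk : j < k) (hinv : e k < e j) :
    l.get (e j) + 1 < l.get (e k) ∨ l.get (e k) + 1 < l.get (e j) := by
  by_contra! hnear
  exact hjk.not_ge (he k j (.single ⟨hinv.le, by omega, by omega⟩))

theorem IsLinearExtension.not_wordRel_of_far (he : IsLinearExtension l e) {i j : Fin l.length}
    (hij : (j : ℕ) = i + 1)
    (hfar : l.get (e i) + 1 < l.get (e j) ∨ l.get (e j) + 1 < l.get (e i)) :
    ¬ wordRel l (e i) (e j) := by
  suffices ∀ z, wordRel l (e i) z → z ≠ e j from fun h => this _ h rfl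
  intro z hz
  induction hz with
  | refl => exact e.injective.ne (Fin.ne_of_val_ne (by omega))
  | @tail y _ hy hyz ih =>
    rintro rfl
    have h1 : i ≤ e.symm y := he _ _ (by rwa [e.apply_symm_apply])
    have h2 : e.symm y ≤ j := he _ _ (by rw [e.apply_symm_apply]; exact .single hyz)
    have h3 : e.symm y ≠ j := fun h => ih (by rw [← h, e.apply_symm_apply])
    have hy : e.symm y = i := by
      rw [Fin.le_def] at h1 h2
      rw [Ne, Fin.ext_iff] at h3
      exact Fin.ext (by omega)
    rw [← e.apply_symm_apply y, hy] at hyz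
    omega

theorem IsLinearExtension.mul_swap (he : IsLinearExtension l e) {i j : Fin l.length}
    (hij : (j : ℕ) = i + 1) (hrel : ¬ wordRel l (e i) (e j)) :
    IsLinearExtension l (e * Equiv.swap i j) := by
  intro a b hab
  by_contra! hba
  by_cases hcover : b = i ∧ a = j
  · obtain ⟨rfl, rfl⟩ := hcover
    simp only [Perm.mul_apply, swap_apply_left, swap_apply_right] at hab
    exact hrel hab
  · exact (Fin.swap_apply_lt_swap_apply_of_adjacent hij hba hcover).not_ge (he _ _ hab)

theorem IsLinearExtension.mul_swap_of_readWord_eq (he : IsLinearExtension l e) {u v : List ℕ}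
    {a b : ℕ} (hw : readWord l e = u ++ a :: b :: v) (hfar : a + 1 < b ∨ b + 1 < a)
    {i j : Fin l.length} (hi : (i : ℕ) = u.length) (hij : (j : ℕ) = i + 1) :
    IsLinearExtension l (e * Equiv.swap i j) ∧
      readWord l (e * Equiv.swap i j) = u ++ b :: a :: v := by
  have ha : l.get (e i) = a := (List.apply_eq_getElem_of_ofFn_eq hw i).trans (by simp [hi])
  have hb : l.get (e j) = b := (List.apply_eq_getElem_of_ofFn_eq hw j).trans (by simp [hij, hi])
  refine ⟨he.mul_swap hij (he.not_wordRel_of_far hij (by rwa [ha, hb])), ?_⟩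
  exact List.ofFn_comp_swap_of_eq_append hw hi hij

theorem IsLinearExtension.commEquiv_readWord (he : IsLinearExtension l e) :
    CommEquiv l (readWord l e) := by
  induction e using (InvImage.wf (fun σ : Perm (Fin l.length) => toLex ⇑σ)
    wellFounded_lt).induction with
  | _ e ih =>
  obtain rfl | hne := eq_or_ne e 1
  · rw [readWord_one]
    exact .refl
  obtain ⟨i, j, hij, hdesc⟩ := Perm.exists_adjacent_descent hne
  have hij_lt : i < j := Fin.lt_def.2 (by omega)
  have hfar := he.far_of_lt hij_lt hdesc
  have hw := List.ofFn_eq_append_cons_cons (fun k => l.get (e k)) hij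
  obtain ⟨he', hw'⟩ := he.mul_swap_of_readWord_eq hw hfar (by simp) hij
  exact (ih (e * Equiv.swap i j) (Pi.lex_desc hij_lt.le hdesc) he').tail
    ⟨_, _, _, _, hfar.symm, hw', hw⟩

theorem exists_readWord_eq_of_commEquiv {m : List ℕ} (hm : CommEquiv l m) :
    ∃ e, IsLinearExtension l e ∧ readWord l e = m := by
  induction hm with
  | refl => exact ⟨1, isLinearExtension_one, readWord_one⟩
  | tail _ hmove ih =>
    obtain ⟨e, he, hw⟩ := ih
    obtain ⟨u, v, a, b, hfar, rfl, rfl⟩ := hmove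
    have hlen : u.length + 1 < l.length := by
      have := congrArg length hw
      simp only [readWord, length_ofFn, length_append, length_cons] at this
      omega
    exact ⟨_, he.mul_swap_of_readWord_eq hw hfar (i := ⟨u.length, by omega⟩)
      (j := ⟨u.length + 1, hlen⟩) rfl rfl⟩

theorem not_lt_of_readWord_eq {e' : Perm (Fin l.length)} (he' : IsLinearExtension l e')
    (hw : readWord l e = readWord l e') {j : Fin l.length} (hbelow : ∀ k < j, e k = e' k) :
    ¬ e j < e' j := by
  intro hlt
  have hletter : l.get (e j) = l.get (e' j) := congrFun (ofFn_inj.1 hw) j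
  obtain ⟨k, hk⟩ := e'.surjective (e j)
  have hkj : k ≤ j := he' k j (hk ▸ .single ⟨hlt.le, by omega, by omega⟩)
  have hne : k ≠ j := by
    rintro rfl
    exact hlt.ne hk.symm
  exact hne (e.injective ((hbelow k (hkj.lt_of_ne hne)).trans hk))

theorem readWord_injOn : Set.InjOn (readWord l) {e | IsLinearExtension l e} := by
  intro e he e' he' hw
  refine Equiv.ext fun j => WellFoundedLT.induction (motive := fun j => e j = e' j) j
    fun j ih => ?_
  exact le_antisymm (not_lt.1 (not_lt_of_readWord_eq he hw.symm fun k hk => (ih k hk).symm))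
    (not_lt.1 (not_lt_of_readWord_eq he' hw ih))

end LinearExtension

theorem linear_extensions_bijOn_commClass_general (l : List ℕ) :
    Set.BijOn (fun e : Equiv.Perm (Fin l.length) => List.ofFn (fun j => l.get (e j)))
      {e | ∀ j k, wordRel l (e j) (e k) → j ≤ k}
      {m | CommEquiv l m} ∧
    Nat.card {m : List ℕ // CommEquiv l m} =
      Nat.card {e : Equiv.Perm (Fin l.length) // ∀ j k, wordRel l (e j) (e k) → j ≤ k} := by
  have hbij : Set.BijOn (readWord l) {e | IsLinearExtension l e} {m | CommEquiv l m} :=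
    ⟨fun _ he => he.commEquiv_readWord, readWord_injOn,
      fun _ hm => exists_readWord_eq_of_commEquiv hm⟩
  exact ⟨hbij, Nat.card_congr (hbij.equiv _).symm⟩

/-- The map sending a linear extension `p₁ ⋯ p_ℓ` of the word poset of a reduced
word `l` to the word `(l_{p₁}, ..., l_{p_ℓ})` is a bijection from the set of
linear extensions of the word poset of `l` onto the commutation class of `l`;
in particular the size of the commutation class equals the number of linear
extensions. -/
theorem linear_extensions_bijOn_commClass (n : ℕ) (w : Equiv.Perm (Fin (n + 1)))
    (l : List ℕ) (h : IsReducedWord n w l) :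
    Set.BijOn (fun e : Equiv.Perm (Fin l.length) => List.ofFn (fun j => l.get (e j)))
      {e | ∀ j k, wordRel l (e j) (e k) → j ≤ k}
      {m | CommEquiv l m} ∧
    Nat.card {m : List ℕ // CommEquiv l m} =
      Nat.card {e : Equiv.Perm (Fin l.length) // ∀ j k, wordRel l (e j) (e k) → j ≤ k} :=
  linear_extensions_bijOn_commClass_general l
end
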